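/- The number of elements of F_1 ∪ F_2 ∪ {0} lying in the interval [0, 2g−1] is exactly g = q_0(q−1). -/

import Mathlib

/-- `q₀ = 2^s`. -/
def q0 (s : ℕ) : ℕ := 2 ^ s

/-- `q = 2 q₀²`. -/
def qS (s : ℕ) : ℕ := 2 * q0 s ^ 2

/-- `m_{j,k,ℓ} = ⌈(q₀/(q₀−1))·(j + k + ℓ − (k+ℓ)/q)⌉`. -/
def mval (s j k l : ℕ) : ℤ :=
  ⌈((q0 s : ℚ) / ((q0 s : ℚ) - 1)) *
    ((j : ℚ) + (k : ℚ) + (l : ℚ) - ((k : ℚ) + (l : ℚ)) / (qS s : ℚ))⌉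

/-- `F₁ = { hq − (ℓ+2k)q₀ − j : ℓ ∈ {0,1}, k,j ∈ {0,…,q₀−1},
    h ∈ {max{1, m_{j,k,ℓ}},…,2q₀} }`. -/
def F1 (s : ℕ) : Set ℕ :=
  {n | ∃ h j k l : ℕ, l ≤ 1 ∧ k < q0 s ∧ j < q0 s ∧
    max 1 (mval s j k l) ≤ (h : ℤ) ∧ h ≤ 2 * q0 s ∧
    n = h * qS s - (l + 2 * k) * q0 s - j}

/-- `F₂ = { hq − (2h−2q₀−1)q₀ − (q₀−1) : h ∈ {q₀+1,…,2q₀} }`. -/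
def F2 (s : ℕ) : Set ℕ :=
  {n | ∃ h : ℕ, q0 s + 1 ≤ h ∧ h ≤ 2 * q0 s ∧
    n = h * qS s - (2 * h - 2 * q0 s - 1) * q0 s - (q0 s - 1)}

/-- `G₁ = { hq − kq₀ − ⌊(2h−k−2)/2⌋ : h ∈ {1,…,q₀}, k ∈ {0,…,2h−2} }`. -/
def G1 (s : ℕ) : Set ℕ :=
  {n | ∃ h k : ℕ, 1 ≤ h ∧ h ≤ q0 s ∧ k ≤ 2 * h - 2 ∧
    n = h * qS s - k * q0 s - (2 * h - k - 2) / 2}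

/-!
Every element of `F₁ ∪ F₂` has the form `n = hq - r` with `1 ≤ h ≤ 2q₀` and
`r = (ℓ + 2k)q₀ + j < q`, so distinct index tuples `(h, j, k, ℓ)` give distinct values.
With `t = j + k + ℓ`, the condition `m_{j,k,ℓ} ≤ h` reads `q₀t + h ≤ q₀h`, and the involution
`(h, j, k, ℓ) ↦ (2q₀ + 1 - h, q₀ - 1 - j, q₀ - 1 - k, 1 - ℓ)` of the box of all `4q₀³` tuples
exchanges this condition with its negation, so `|F₁| = 2q₀³`. The `q₀` elements of `F₂` come
from tuples with `t = h - 1`, which violate it. A value exceeds `2g - 1` only if `h = 2q₀` and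
`r ≤ 2q₀`; these are `2q₀ + 1` elements of `F₁`. The count is
`2q₀³ + q₀ - (2q₀ + 1) + 1 = q₀(q - 1)`.
-/

open Finset

section Digits

variable (Q : ℕ)

def digitTriples : Finset (ℕ × ℕ × ℕ) := range Q ×ˢ range Q ×ˢ range 2

def digitSum (x : ℕ × ℕ × ℕ) : ℕ := x.1 + x.2.1 + x.2.2

def residue (x : ℕ × ℕ × ℕ) : ℕ := (x.2.2 + 2 * x.2.1) * Q + x.1

variable {Q}

lemma mem_digitTriples {x : ℕ × ℕ × ℕ} :
    x ∈ digitTriples Q ↔ x.1 < Q ∧ x.2.1 < Q ∧ x.2.2 < 2 := by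
  simp [digitTriples]

lemma card_digitTriples : #(digitTriples Q) = 2 * Q ^ 2 := by
  simp [digitTriples]; ring

lemma residue_div_mod {x : ℕ × ℕ × ℕ} (hx : x ∈ digitTriples Q) :
    residue Q x / Q = x.2.2 + 2 * x.2.1 ∧ residue Q x % Q = x.1 := by
  rw [mem_digitTriples] at hx
  rw [Nat.div_mod_unique (by omega), residue, mul_comm]
  exact ⟨add_comm _ _, hx.1⟩

lemma residue_injOn : Set.InjOn (residue Q) (digitTriples Q) := by
  intro x hx y hy hxy
  have hx' := residue_div_mod hx
  have hy' := residue_div_mod hy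
  rw [hxy] at hx'
  rw [mem_coe, mem_digitTriples] at hx hy
  ext <;> omega

lemma residue_lt {x : ℕ × ℕ × ℕ} (hx : x ∈ digitTriples Q) : residue Q x < 2 * Q ^ 2 := by
  rw [mem_digitTriples] at hx
  have : (x.2.2 + 2 * x.2.1 + 1) * Q ≤ 2 * Q * Q := Nat.mul_le_mul_right _ (by omega)
  rw [residue]; nlinarith

lemma image_residue : (digitTriples Q).image (residue Q) = range (2 * Q ^ 2) := by
  refine eq_of_subset_of_card_le (fun r hr => ?_) ?_
  · obtain ⟨x, hx, rfl⟩ := mem_image.mp hr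
    exact mem_range.mpr (residue_lt hx)
  · rw [card_range, card_image_of_injOn residue_injOn, card_digitTriples]

lemma card_filter_residue_le {m : ℕ} (hm : m < 2 * Q ^ 2) :
    #{x ∈ digitTriples Q | residue Q x ≤ m} = m + 1 := by
  have himage : {x ∈ digitTriples Q | residue Q x ≤ m}.image (residue Q) = range (m + 1) := by
    ext r
    rw [← filter_image (p := (· ≤ m)), image_residue, mem_filter, mem_range, mem_range]
    omega
  rw [← card_image_of_injOn (residue_injOn.mono (filter_subset _ _)), himage, card_range]

lemma digitSum_le_of_residue_le (hQ : 2 ≤ Q) {x : ℕ × ℕ × ℕ} (hx : x ∈ digitTriples Q)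
    (hr : residue Q x ≤ 2 * Q) : digitSum x ≤ Q := by
  obtain ⟨hdiv, hmod⟩ := residue_div_mod hx
  have hdiv_le : residue Q x / Q ≤ 2 := by
    calc residue Q x / Q ≤ 2 * Q / Q := Nat.div_le_div_right hr
      _ = 2 := by simp [show Q ≠ 0 by omega]
  have hsplit := Nat.div_add_mod (residue Q x) Q
  rw [mem_digitTriples] at hx
  rcases Nat.lt_or_eq_of_le hdiv_le with hlt | heq
  · rw [digitSum]; omega
  · rw [heq] at hsplit
    rw [digitSum]; omega

end Digits

section IndexSets

variable (Q : ℕ)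

def indexBox : Finset (ℕ × ℕ × ℕ × ℕ) := Icc 1 (2 * Q) ×ˢ digitTriples Q

def f1Index : Finset (ℕ × ℕ × ℕ × ℕ) := {p ∈ indexBox Q | Q * digitSum p.2 + p.1 ≤ Q * p.1}

def f2Index : Finset (ℕ × ℕ × ℕ × ℕ) :=
  (Icc (Q + 1) (2 * Q)).image fun h => (h, Q - 1, h - Q - 1, 1)

def reflectIndex (p : ℕ × ℕ × ℕ × ℕ) : ℕ × ℕ × ℕ × ℕ :=
  (2 * Q + 1 - p.1, Q - 1 - p.2.1, Q - 1 - p.2.2.1, 1 - p.2.2.2)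

variable {Q}

lemma mem_indexBox {p : ℕ × ℕ × ℕ × ℕ} :
    p ∈ indexBox Q ↔ 1 ≤ p.1 ∧ p.1 ≤ 2 * Q ∧ p.2.1 < Q ∧ p.2.2.1 < Q ∧ p.2.2.2 < 2 := by
  rw [indexBox, mem_product, mem_Icc, mem_digitTriples, and_assoc]

lemma card_indexBox : #(indexBox Q) = 4 * Q ^ 3 := by
  rw [indexBox, card_product, Nat.card_Icc, card_digitTriples, Nat.add_sub_cancel]; ring

lemma reflectIndex_mem_indexBox {p : ℕ × ℕ × ℕ × ℕ} (hp : p ∈ indexBox Q) :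
    reflectIndex Q p ∈ indexBox Q := by
  rw [mem_indexBox] at hp ⊢; simp only [reflectIndex]; omega

lemma reflectIndex_reflectIndex {p : ℕ × ℕ × ℕ × ℕ} (hp : p ∈ indexBox Q) :
    reflectIndex Q (reflectIndex Q p) = p := by
  rw [mem_indexBox] at hp; simp only [reflectIndex]; ext <;> simp only <;> omega

/-- In integers the condition for `reflectIndex Q p` reads `Q t + h ≥ Q h + 1`, where
`t = digitSum p.2`, because the reflection sends `(h, t)` to `(2Q + 1 - h, 2Q - 1 - t)`. -/
lemma reflectIndex_mem_f1Index_iff {p : ℕ × ℕ × ℕ × ℕ} (hp : p ∈ indexBox Q) :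
    reflectIndex Q p ∈ f1Index Q ↔ p ∉ f1Index Q := by
  have hp' := mem_indexBox.mp hp
  have hsum_rev : Q * digitSum (reflectIndex Q p).2 + Q * digitSum p.2 + Q = Q * (2 * Q) := by
    rw [← mul_add, ← mul_add_one]; congr 1; simp only [digitSum, reflectIndex]; omega
  have hfirst_rev : Q * (reflectIndex Q p).1 + Q * p.1 = Q * (2 * Q) + Q := by
    rw [← mul_add, ← mul_add_one]; congr 1; simp only [reflectIndex]; omega
  have hfirst : (reflectIndex Q p).1 + p.1 = 2 * Q + 1 := by simp only [reflectIndex]; omega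
  simp only [f1Index, mem_filter, reflectIndex_mem_indexBox hp, hp, true_and]
  omega

lemma card_f1Index : #(f1Index Q) = 2 * Q ^ 3 := by
  have hswap : #{p ∈ indexBox Q | ¬ (Q * digitSum p.2 + p.1 ≤ Q * p.1)} = #(f1Index Q) := by
    refine card_nbij' (reflectIndex Q) (reflectIndex Q) (fun p hp => ?_) (fun p hp => ?_)
      (fun p hp => reflectIndex_reflectIndex (mem_filter.mp hp).1)
      (fun p hp => reflectIndex_reflectIndex (mem_filter.mp hp).1)
    · have hp := mem_filter.mp hp
      exact (reflectIndex_mem_f1Index_iff hp.1).mpr fun h => hp.2 (mem_filter.mp h).2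
    · have hp := mem_filter.mp hp
      refine mem_filter.mpr ⟨reflectIndex_mem_indexBox hp.1, fun h => ?_⟩
      exact (reflectIndex_mem_f1Index_iff hp.1).mp
        (mem_filter.mpr ⟨reflectIndex_mem_indexBox hp.1, h⟩) (mem_filter.mpr hp)
  have hsplit := card_filter_add_card_filter_not (s := indexBox Q)
    (fun p => Q * digitSum p.2 + p.1 ≤ Q * p.1)
  rw [hswap, card_indexBox] at hsplit
  change #(f1Index Q) + #(f1Index Q) = 4 * Q ^ 3 at hsplit
  omega

end IndexSets

section Values

variable {Q : ℕ}

lemma f2Index_subset_indexBox : f2Index Q ⊆ indexBox Q := by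
  intro p hp
  obtain ⟨h, hh, rfl⟩ := mem_image.mp hp
  rw [mem_Icc] at hh
  rw [mem_indexBox]; dsimp only; omega

lemma disjoint_f1Index_f2Index : Disjoint (f1Index Q) (f2Index Q) := by
  refine disjoint_right.mpr fun p hp hp1 => ?_
  obtain ⟨h, hh, rfl⟩ := mem_image.mp hp
  rw [mem_Icc] at hh
  have hsum : digitSum (Q - 1, h - Q - 1, 1) + 1 = h := by simp only [digitSum]; omega
  have hcond := (mem_filter.mp hp1).2
  have : Q * h = Q * digitSum (Q - 1, h - Q - 1, 1) + Q := by rw [← mul_add_one, hsum]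
  dsimp only at hcond
  omega

lemma f1Index_union_f2Index_subset : f1Index Q ∪ f2Index Q ⊆ indexBox Q :=
  union_subset (filter_subset _ _) f2Index_subset_indexBox

lemma card_f2Index : #(f2Index Q) = Q := by
  rw [f2Index, card_image_of_injective _ fun a b hab => (Prod.mk.inj hab).1, Nat.card_Icc]
  omega

variable (Q) in
def nValue (p : ℕ × ℕ × ℕ × ℕ) : ℕ :=
  p.1 * (2 * Q ^ 2) - (p.2.2.2 + 2 * p.2.2.1) * Q - p.2.1

lemma nValue_eq_mul_sub_residue (p : ℕ × ℕ × ℕ × ℕ) :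
    nValue Q p = p.1 * (2 * Q ^ 2) - residue Q p.2 :=
  Nat.sub_sub _ _ _

/-- Adding `q - 1` turns `a q - r` into `a q + (q - 1 - r)`, whose quotient and remainder by `q`
are `a` and `q - 1 - r`. -/
lemma eq_of_mul_sub_eq_mul_sub {q a b r r' : ℕ} (ha : 0 < a) (hb : 0 < b) (hr : r < q)
    (hr' : r' < q) (h : a * q - r = b * q - r') : a = b ∧ r = r' := by
  have decode : ∀ {c t : ℕ}, 0 < c → t < q →
      (c * q - t + (q - 1)) / q = c ∧ (c * q - t + (q - 1)) % q = q - 1 - t := by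
    intro c t hc ht
    have := Nat.le_mul_of_pos_left q hc
    rw [Nat.div_mod_unique (by omega), mul_comm q]
    omega
  obtain ⟨ha1, ha2⟩ := decode ha hr
  obtain ⟨hb1, hb2⟩ := decode hb hr'
  rw [h] at ha1 ha2
  omega

lemma nValue_injOn : Set.InjOn (nValue Q) (indexBox Q) := by
  rintro ⟨h, x⟩ hp ⟨h', x'⟩ hp' heq
  rw [mem_coe, indexBox, mem_product, mem_Icc] at hp hp'
  rw [nValue_eq_mul_sub_residue, nValue_eq_mul_sub_residue] at heq
  dsimp only at hp hp' heq
  obtain ⟨hh, hres⟩ := eq_of_mul_sub_eq_mul_sub (by omega) (by omega)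
    (residue_lt hp.2) (residue_lt hp'.2) heq
  exact Prod.ext hh (residue_injOn hp.2 hp'.2 hres)

lemma nValue_pos {p : ℕ × ℕ × ℕ × ℕ} (hp : p ∈ indexBox Q) : 0 < nValue Q p := by
  rw [indexBox, mem_product, mem_Icc] at hp
  have := residue_lt hp.2
  have := Nat.le_mul_of_pos_left (2 * Q ^ 2) (show 0 < p.1 by omega)
  rw [nValue_eq_mul_sub_residue]; omega

lemma lt_nValue_iff (hQ : 2 ≤ Q) {p : ℕ × ℕ × ℕ × ℕ} (hp : p ∈ indexBox Q) :
    2 * (Q * (2 * Q ^ 2 - 1)) - 1 < nValue Q p ↔ p.1 = 2 * Q ∧ residue Q p.2 ≤ 2 * Q := by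
  rw [indexBox, mem_product, mem_Icc] at hp
  have hres := residue_lt hp.2
  have hq : 2 * Q + 1 ≤ 2 * Q ^ 2 := by nlinarith
  have htop : 2 * Q * (2 * Q ^ 2) = 2 * (Q * (2 * Q ^ 2)) := by ring
  have hg : Q * (2 * Q ^ 2 - 1) = Q * (2 * Q ^ 2) - Q := Nat.mul_sub_one _ _
  have hqM : 2 * Q ^ 2 ≤ Q * (2 * Q ^ 2) := Nat.le_mul_of_pos_left _ (by omega)
  rw [nValue_eq_mul_sub_residue]
  rcases Nat.lt_or_eq_of_le hp.1.2 with hlt | heq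
  · have : p.1 * (2 * Q ^ 2) + 2 * Q ^ 2 ≤ 2 * Q * (2 * Q ^ 2) := by
      rw [← Nat.succ_mul]; exact Nat.mul_le_mul_right _ hlt
    omega
  · rw [heq]; omega

end Values

section Counting

variable {Q : ℕ}

lemma filter_indexBox_lt_nValue (hQ : 2 ≤ Q) :
    {p ∈ indexBox Q | 2 * (Q * (2 * Q ^ 2 - 1)) - 1 < nValue Q p} =
      {x ∈ digitTriples Q | residue Q x ≤ 2 * Q}.image (Prod.mk (2 * Q)) := by
  ext ⟨h, x⟩
  simp only [mem_filter, mem_image, Prod.mk.injEq]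
  constructor
  · rintro ⟨hp, hlt⟩
    obtain ⟨rfl, hres⟩ := (lt_nValue_iff hQ hp).mp hlt
    exact ⟨x, ⟨(mem_product.mp hp).2, hres⟩, rfl, rfl⟩
  · rintro ⟨x, ⟨hx, hres⟩, rfl, rfl⟩
    have hp : (2 * Q, x) ∈ indexBox Q := mem_product.mpr ⟨mem_Icc.mpr ⟨by omega, le_rfl⟩, hx⟩
    exact ⟨hp, (lt_nValue_iff hQ hp).mpr ⟨rfl, hres⟩⟩

lemma card_filter_indexBox_lt_nValue (hQ : 2 ≤ Q) :
    #{p ∈ indexBox Q | 2 * (Q * (2 * Q ^ 2 - 1)) - 1 < nValue Q p} = 2 * Q + 1 := by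
  rw [filter_indexBox_lt_nValue hQ, card_image_of_injective _ (Prod.mk_right_injective _),
    card_filter_residue_le (by nlinarith)]

lemma filter_indexBox_lt_nValue_subset_f1Index (hQ : 2 ≤ Q) :
    {p ∈ indexBox Q | 2 * (Q * (2 * Q ^ 2 - 1)) - 1 < nValue Q p} ⊆ f1Index Q := by
  rw [filter_indexBox_lt_nValue hQ]
  intro p hp
  obtain ⟨x, hx, rfl⟩ := mem_image.mp hp
  obtain ⟨hx, hres⟩ := mem_filter.mp hx
  have hsum := Nat.mul_le_mul_left Q (digitSum_le_of_residue_le hQ hx hres)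
  refine mem_filter.mpr ⟨mem_product.mpr ⟨mem_Icc.mpr ⟨by omega, le_rfl⟩, hx⟩, ?_⟩
  dsimp only
  nlinarith

lemma card_filter_nValue_le (hQ : 2 ≤ Q) :
    #{p ∈ f1Index Q ∪ f2Index Q | nValue Q p ≤ 2 * (Q * (2 * Q ^ 2 - 1)) - 1} + (2 * Q + 1) =
      2 * Q ^ 3 + Q := by
  have hhigh : {p ∈ f1Index Q ∪ f2Index Q | ¬ nValue Q p ≤ 2 * (Q * (2 * Q ^ 2 - 1)) - 1} =
      {p ∈ indexBox Q | 2 * (Q * (2 * Q ^ 2 - 1)) - 1 < nValue Q p} := by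
    ext p
    simp only [mem_filter, not_le]
    exact ⟨fun h => ⟨f1Index_union_f2Index_subset h.1, h.2⟩, fun h =>
      ⟨subset_union_left (filter_indexBox_lt_nValue_subset_f1Index hQ (mem_filter.mpr h)), h.2⟩⟩
  rw [← card_filter_indexBox_lt_nValue hQ, ← hhigh, card_filter_add_card_filter_not,
    card_union_of_disjoint disjoint_f1Index_f2Index, card_f1Index, card_f2Index]

end Counting

lemma intCast_sub_le_intCast_iff {R : Type*} [Ring R] [LinearOrder R] [IsStrictOrderedRing R]
    {a b : ℤ} {ε : R} (hε0 : 0 ≤ ε) (hε1 : ε < 1) : (a : R) - ε ≤ b ↔ a ≤ b := by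
  refine ⟨fun h => ?_, fun h => (sub_le_self _ hε0).trans (Int.cast_le.mpr h)⟩
  have : (a : R) < b + 1 :=
    calc (a : R) ≤ b + ε := sub_le_iff_le_add.mp h
      _ < b + 1 := by gcongr
  exact Int.lt_add_one_iff.mp (by exact_mod_cast this)

lemma two_le_q0 {s : ℕ} (hs : 1 ≤ s) : 2 ≤ q0 s :=
  le_self_pow₀ one_le_two (by omega)

/-- Clearing the denominator `q₀ - 1` leaves `q₀ (j + k + ℓ) - (k + ℓ)/(2q₀) ≤ (q₀ - 1) h`,
and the correction `(k + ℓ)/(2q₀)` lies in `[0, 1)`. -/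
lemma mval_le_iff {s j k l : ℕ} (hs : 1 ≤ s) (hk : k < q0 s) (hl : l ≤ 1) (h : ℕ) :
    mval s j k l ≤ h ↔ q0 s * digitSum (j, k, l) + h ≤ q0 s * h := by
  have hQ : (2 : ℚ) ≤ q0 s := by exact_mod_cast two_le_q0 hs
  have hkl : (k : ℚ) + l < 2 * q0 s := by
    have : k + l < 2 * q0 s := by omega
    exact_mod_cast this
  have hrewrite : ((q0 s : ℚ) / ((q0 s : ℚ) - 1)) *
      ((j : ℚ) + (k : ℚ) + (l : ℚ) - ((k : ℚ) + (l : ℚ)) / (qS s : ℚ)) =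
      (((q0 s * (j + k + l) : ℤ) : ℚ) - (k + l) / (2 * q0 s)) / ((q0 s : ℚ) - 1) := by
    rw [qS]; push_cast; field_simp
  rw [mval, Int.ceil_le, hrewrite, div_le_iff₀ (by linarith),
    show ((h : ℤ) : ℚ) * ((q0 s : ℚ) - 1) = ((h * (q0 s - 1 : ℤ) : ℤ) : ℚ) by push_cast; ring,
    intCast_sub_le_intCast_iff (by positivity) (by rw [div_lt_one (by positivity)]; exact hkl)]
  simp only [digitSum]
  zify
  constructor <;> intro <;> linarith

lemma F1_eq_image {s : ℕ} (hs : 1 ≤ s) : F1 s = nValue (q0 s) '' f1Index (q0 s) := by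
  ext n
  simp only [F1, Set.mem_ofPred_eq, Set.mem_image, mem_coe, f1Index, mem_filter, mem_indexBox]
  constructor
  · rintro ⟨h, j, k, l, hl, hk, hj, hm, hh, rfl⟩
    rw [max_le_iff, Nat.one_le_cast] at hm
    exact ⟨(h, j, k, l),
      ⟨⟨hm.1, hh, hj, hk, show l < 2 by omega⟩, (mval_le_iff hs hk hl h).mp hm.2⟩, rfl⟩
  · rintro ⟨⟨h, j, k, l⟩, ⟨⟨h1, h2, hj, hk, hl⟩, hcond⟩, rfl⟩
    dsimp only at h1 h2 hj hk hl hcond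
    refine ⟨h, j, k, l, by omega, hk, hj, ?_, h2, rfl⟩
    rw [max_le_iff, Nat.one_le_cast]
    exact ⟨h1, (mval_le_iff hs hk (by omega) h).mpr hcond⟩

lemma F2_eq_image (s : ℕ) : F2 s = nValue (q0 s) '' f2Index (q0 s) := by
  have hvalue : ∀ h, q0 s + 1 ≤ h → nValue (q0 s) (h, q0 s - 1, h - q0 s - 1, 1) =
      h * qS s - (2 * h - 2 * q0 s - 1) * q0 s - (q0 s - 1) := fun h hh => by
    rw [nValue, show 1 + 2 * (h - q0 s - 1) = 2 * h - 2 * q0 s - 1 by omega]; rfl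
  ext n
  simp only [F2, Set.mem_ofPred_eq, f2Index, coe_image, coe_Icc, Set.mem_image, Set.mem_Icc]
  constructor
  · rintro ⟨h, h1, h2, rfl⟩
    exact ⟨_, ⟨h, ⟨h1, h2⟩, rfl⟩, hvalue h h1⟩
  · rintro ⟨_, ⟨h, ⟨h1, h2⟩, rfl⟩, rfl⟩
    exact ⟨h, h1, h2, hvalue h h1⟩

/-- `|(F₁ ∪ F₂ ∪ {0}) ∩ [0, 2g−1]| = g = q₀(q−1)`. -/
theorem stmt7 (s : ℕ) (hs : 1 ≤ s) :
    ((F1 s ∪ F2 s ∪ {0}) ∩ Set.Icc 0 (2 * (q0 s * (qS s - 1)) - 1)).ncard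
      = q0 s * (qS s - 1) := by
  have hQ := two_le_q0 hs
  have hcount := card_filter_nValue_le hQ
  set Q := q0 s
  set N := 2 * (Q * (2 * Q ^ 2 - 1)) - 1
  set S := {p ∈ f1Index Q ∪ f2Index Q | nValue Q p ≤ N}
  have hS : ↑S ⊆ (indexBox Q : Set (ℕ × ℕ × ℕ × ℕ)) := fun p hp =>
    f1Index_union_f2Index_subset (mem_filter.mp hp).1
  have hset : (F1 s ∪ F2 s ∪ {0}) ∩ Set.Icc 0 N = insert 0 (nValue Q '' S) := by
    rw [F1_eq_image hs, F2_eq_image, ← Set.image_union, ← coe_union]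
    ext n
    simp only [S, Set.mem_inter_iff, Set.mem_union, Set.mem_singleton_iff, Set.mem_Icc,
      Set.mem_insert_iff, Set.mem_image, mem_coe, mem_filter, zero_le, true_and]
    aesop
  have h0 : 0 ∉ nValue Q '' S := fun ⟨p, hp, h0⟩ => (nValue_pos (hS hp)).ne' h0
  change ((F1 s ∪ F2 s ∪ {0}) ∩ Set.Icc 0 N).ncard = Q * (2 * Q ^ 2 - 1)
  rw [hset, Set.ncard_insert_of_notMem h0, (nValue_injOn.mono hS).ncard_image,
    Set.ncard_coe_finset, Nat.mul_sub_one, show Q * (2 * Q ^ 2) = 2 * Q ^ 3 by ring]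
  omega
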